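/- arXiv:1502.01427 — 5 statements merged into one kernel-verified Lean document; each statement's English description precedes it below -/
import Mathlib

section
/- Let n ≥ 2 and consider n random unit vectors in R^n chosen independently from the uniform measure on S^{n-1}. Then the second moment of the volume V of the parallelotope they span equals E[V²] = (Γ(n/2)/Γ((n+2)/2))^{n-1} · Γ((n+1)/2)Γ(n/2)/Γ(1/2), and combined with the sphere surface measure this gives ∫_{(S^{n-1})^n} |det ν|² dμ = Γ(n+1) π^{n²/2} / Γ((n+2)/2)^n. -/
open MeasureTheory Real Finset

section Aux

open Metric Set

private lemma polar_eq' (n : ℕ) (hn : 2 ≤ n) (j k : Fin n) :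
    ∫ x : EuclideanSpace ℝ (Fin n), x j * x k * Real.exp (-‖x‖ ^ 2) =
      (∫ ω : sphere (0 : EuclideanSpace ℝ (Fin n)) 1,
          (ω : EuclideanSpace ℝ (Fin n)) j * (ω : EuclideanSpace ℝ (Fin n)) k
          ∂((volume : Measure (EuclideanSpace ℝ (Fin n))).toSphere)) *
        ∫ r : Ioi (0:ℝ), (r:ℝ)^2 * Real.exp (-(r:ℝ)^2)
          ∂(MeasureTheory.Measure.volumeIoiPow (n - 1)) := by
  haveI : Nonempty (Fin n) := ⟨⟨0, by omega⟩⟩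
  set E := EuclideanSpace ℝ (Fin n)
  have hdim : Module.finrank ℝ E = n := finrank_euclideanSpace_fin
  set F : E → ℝ := fun x => x j * x k * Real.exp (-‖x‖ ^ 2) with hF
  set H : sphere (0:E) 1 × Ioi (0:ℝ) → ℝ := fun p =>
    ((p.1 : E) j * (p.1 : E) k) * ((p.2 : ℝ)^2 * Real.exp (-(p.2:ℝ)^2)) with hH
  have key : ∀ x : ({(0:E)}ᶜ : Set E), F x.1 = H (homeomorphUnitSphereProd E x) := by
    rintro ⟨x, hx⟩
    have hx0 : x ≠ 0 := hx
    have hnorm : ‖x‖ ≠ 0 := norm_ne_zero_iff.2 hx0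
    simp only [hF, hH, homeomorphUnitSphereProd]
    show x j * x k * Real.exp (-‖x‖ ^ 2)
      = (((1:ℝ) • ‖x‖⁻¹ • x : E) j * ((1:ℝ) • ‖x‖⁻¹ • x : E) k) * ((‖x‖ / 1)^2 * Real.exp (-(‖x‖ / 1)^2))
    have h1 : ((1:ℝ) • ‖x‖⁻¹ • x : E) j = ‖x‖⁻¹ * x j := by rw [one_smul]; rfl
    have h2 : ((1:ℝ) • ‖x‖⁻¹ • x : E) k = ‖x‖⁻¹ * x k := by rw [one_smul]; rfl
    rw [h1, h2]
    field_simp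
  calc ∫ x : E, F x = ∫ x in ({(0:E)}ᶜ : Set E), F x := by
        rw [restrict_compl_singleton]
    _ = ∫ x : ({(0:E)}ᶜ : Set E), F x.1 ∂(Measure.comap Subtype.val volume) := by
        rw [integral_subtype_comap (measurableSet_singleton (0:E)).compl]
    _ = ∫ p : sphere (0:E) 1 × Ioi (0:ℝ), H p
          ∂(((volume : Measure E).toSphere).prod
            (MeasureTheory.Measure.volumeIoiPow (Module.finrank ℝ E - 1))) := by
        rw [← (volume : Measure E).measurePreserving_homeomorphUnitSphereProd.integral_comp
          (Homeomorph.measurableEmbedding _) H]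
        exact integral_congr_ae (Filter.Eventually.of_forall key)
    _ = _ := by
        rw [hdim, integral_prod_mul (fun ω : sphere (0:E) 1 => (ω : E) j * (ω : E) k)
          (fun r : Ioi (0:ℝ) => (r:ℝ)^2 * Real.exp (-(r:ℝ)^2))]

private lemma gauss_prod' (n : ℕ) (j k : Fin n) :
    ∫ x : EuclideanSpace ℝ (Fin n), x j * x k * Real.exp (-‖x‖ ^ 2) =
      ∏ i : Fin n, ∫ t : ℝ,
        (if i = j then t else 1) * (if i = k then t else 1) * Real.exp (-t^2) := by
  rw [← ((EuclideanSpace.volume_preserving_symm_measurableEquiv_toLp (Fin n)).symm _).integral_comp'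
    (fun x : EuclideanSpace ℝ (Fin n) => x j * x k * Real.exp (-‖x‖ ^ 2))]
  rw [← MeasureTheory.integral_fintype_prod_eq_prod
    (fun i t => (if i = j then t else 1) * (if i = k then t else 1) * Real.exp (-t^2))]
  apply integral_congr_ae; apply Filter.Eventually.of_forall
  intro y
  have hn2 : ‖((MeasurableEquiv.toLp 2 (Fin n → ℝ)).symm).symm y‖ ^ 2 = ∑ i, y i ^ 2 := by
    rw [EuclideanSpace.norm_eq, Real.sq_sqrt (by positivity)]
    simp [sq_abs]
  show (((MeasurableEquiv.toLp 2 (Fin n → ℝ)).symm).symm y) j *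
      (((MeasurableEquiv.toLp 2 (Fin n → ℝ)).symm).symm y) k * Real.exp (-‖_‖^2) = _
  rw [hn2]
  have h1 : (((MeasurableEquiv.toLp 2 (Fin n → ℝ)).symm).symm y) j = y j := rfl
  have h2 : (((MeasurableEquiv.toLp 2 (Fin n → ℝ)).symm).symm y) k = y k := rfl
  rw [h1, h2]
  show _ = ∏ i : Fin n, ((if i = j then y i else 1) * if i = k then y i else 1) * rexp (-y i ^ 2)
  rw [Finset.prod_mul_distrib, Finset.prod_mul_distrib, Finset.prod_ite_eq' univ j (fun t => y t),
    Finset.prod_ite_eq' univ k (fun t => y t), ← Real.exp_sum]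
  simp [Finset.sum_neg_distrib]

private lemma int_exp_sq' : ∫ t : ℝ, Real.exp (-t^2) = Real.sqrt π := by
  simpa using integral_gaussian 1

private lemma int_odd_exp_sq' : ∫ t : ℝ, t * Real.exp (-t^2) = 0 := by
  have h := (Measure.measurePreserving_neg (volume : Measure ℝ)).integral_comp
    (Homeomorph.neg ℝ).measurableEmbedding (fun t : ℝ => t * Real.exp (-t^2))
  have h2 : ∫ t : ℝ, (-t) * Real.exp (-(-t)^2) = -∫ t : ℝ, t * Real.exp (-t^2) := by
    rw [← integral_neg]; congr 1; ext t; ring_nf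
  rw [h2] at h
  linarith

private lemma integrable_sq_exp' : Integrable fun t : ℝ => t^2 * Real.exp (-t^2) := by
  have := integrable_rpow_mul_exp_neg_mul_sq (b := 1) one_pos (s := 2) (by norm_num)
  simpa [Real.rpow_two, neg_one_mul] using this

private lemma int_sq_exp_pos' : 0 < ∫ t : ℝ, t^2 * Real.exp (-t^2) := by
  rw [integral_pos_iff_support_of_nonneg (fun t => by positivity) integrable_sq_exp']
  have hs : Function.support (fun t : ℝ => t^2 * Real.exp (-t^2)) = {(0:ℝ)}ᶜ := by
    ext t; simp [Function.support, pow_eq_zero_iff, Real.exp_ne_zero]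
  rw [hs]
  calc (0:ENNReal) < volume (Ioi (0:ℝ)) := by simp [Real.volume_Ioi]
    _ ≤ volume ({(0:ℝ)}ᶜ) := measure_mono fun x hx => ne_of_gt hx

private lemma gauss_val' (n : ℕ) (j k : Fin n) :
    ∫ x : EuclideanSpace ℝ (Fin n), x j * x k * Real.exp (-‖x‖ ^ 2) =
      if j = k then (∫ t : ℝ, t^2 * Real.exp (-t^2)) * Real.sqrt π ^ (n - 1) else 0 := by
  rw [gauss_prod' n j k]
  by_cases hjk : j = k
  · subst hjk; simp only [if_true]
    rw [← Finset.mul_prod_erase univ _ (Finset.mem_univ j)]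
    have h1 : ∫ t : ℝ, (if j = j then t else 1) * (if j = j then t else 1) * Real.exp (-t^2)
        = ∫ t : ℝ, t^2 * Real.exp (-t^2) := by simp [sq]
    have h2 : ∀ i ∈ univ.erase j, (∫ t : ℝ,
        (if i = j then t else 1) * (if i = j then t else 1) * Real.exp (-t^2)) = Real.sqrt π := by
      intro i hi
      simp only [if_neg (Finset.mem_erase.1 hi).1, one_mul]
      simpa using int_exp_sq'
    rw [h1, Finset.prod_congr rfl h2, Finset.prod_const, Finset.card_erase_of_mem (Finset.mem_univ j),
      Finset.card_univ, Fintype.card_fin]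
  · rw [if_neg hjk]
    apply Finset.prod_eq_zero (Finset.mem_univ j)
    simp only [if_pos rfl, if_neg (fun h : j = k => hjk h)]
    simpa using int_odd_exp_sq'

private lemma coord_abs_le' (n : ℕ) (x : EuclideanSpace ℝ (Fin n)) (j : Fin n) : |x j| ≤ ‖x‖ := by
  rw [EuclideanSpace.norm_eq, ← Real.sqrt_sq_eq_abs]
  apply Real.sqrt_le_sqrt
  simpa [sq_abs] using Finset.single_le_sum (f := fun i => x i ^ 2)
    (fun i _ => sq_nonneg (x i)) (Finset.mem_univ j)

private lemma sphere_integrable' (n : ℕ) (μ : Measure (sphere (0 : EuclideanSpace ℝ (Fin n)) 1))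
    [IsFiniteMeasure μ] (j k : Fin n) :
    Integrable (fun ω : sphere (0 : EuclideanSpace ℝ (Fin n)) 1 =>
      (ω : EuclideanSpace ℝ (Fin n)) j * (ω : EuclideanSpace ℝ (Fin n)) k) μ := by
  have hc : Continuous (fun ω : sphere (0 : EuclideanSpace ℝ (Fin n)) 1 =>
      (ω : EuclideanSpace ℝ (Fin n)) j * (ω : EuclideanSpace ℝ (Fin n)) k) :=
    ((PiLp.continuous_apply _ _ j).comp continuous_subtype_val).mul
      ((PiLp.continuous_apply _ _ k).comp continuous_subtype_val)
  exact hc.integrable_of_hasCompactSupport (HasCompactSupport.of_compactSpace _)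

private lemma sum_coord_sq' (n : ℕ) (ω : sphere (0 : EuclideanSpace ℝ (Fin n)) 1) :
    ∑ j : Fin n, (ω : EuclideanSpace ℝ (Fin n)) j * (ω : EuclideanSpace ℝ (Fin n)) j = 1 := by
  have h : ‖(ω : EuclideanSpace ℝ (Fin n))‖ = 1 := by
    simpa using mem_sphere_zero_iff_norm.1 ω.2
  have := EuclideanSpace.norm_eq (ω : EuclideanSpace ℝ (Fin n))
  rw [h] at this
  have h2 : ∑ i : Fin n, ‖(ω : EuclideanSpace ℝ (Fin n)) i‖ ^ 2 = 1 :=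
    Real.sqrt_eq_one.mp this.symm
  simpa [sq_abs, sq] using h2

private lemma sphere_moment' (n : ℕ) (hn : 2 ≤ n) (j k : Fin n) :
    ∫ ω : sphere (0 : EuclideanSpace ℝ (Fin n)) 1,
        (ω : EuclideanSpace ℝ (Fin n)) j * (ω : EuclideanSpace ℝ (Fin n)) k
        ∂((volume : Measure (EuclideanSpace ℝ (Fin n))).toSphere) =
      (if j = k then (n:ℝ)⁻¹ else 0) *
        (((volume : Measure (EuclideanSpace ℝ (Fin n))).toSphere univ).toReal) := by
  haveI : Nonempty (Fin n) := ⟨⟨0, by omega⟩⟩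
  set σm := (volume : Measure (EuclideanSpace ℝ (Fin n))).toSphere with hσm
  set c := ∫ r : Ioi (0:ℝ), (r:ℝ)^2 * Real.exp (-(r:ℝ)^2)
          ∂(MeasureTheory.Measure.volumeIoiPow (n - 1)) with hc
  set A := ∫ t : ℝ, t^2 * Real.exp (-t^2) with hA
  have key : ∀ j k : Fin n,
      (∫ ω : sphere (0 : EuclideanSpace ℝ (Fin n)) 1,
        (ω : EuclideanSpace ℝ (Fin n)) j * (ω : EuclideanSpace ℝ (Fin n)) k ∂σm) * c =
      if j = k then A * Real.sqrt π ^ (n - 1) else 0 := by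
    intro j k
    rw [← polar_eq' n hn j k, gauss_val' n j k]
  have hABpos : 0 < A * Real.sqrt π ^ (n - 1) := by
    apply mul_pos int_sq_exp_pos'
    positivity
  have hc0 : c ≠ 0 := by
    intro h
    have := key j j
    rw [h, mul_zero, if_pos rfl] at this
    exact hABpos.ne this
  have hsum : ∑ i : Fin n, (∫ ω : sphere (0 : EuclideanSpace ℝ (Fin n)) 1,
      (ω : EuclideanSpace ℝ (Fin n)) i * (ω : EuclideanSpace ℝ (Fin n)) i ∂σm)
      = (σm univ).toReal := by
    rw [← integral_finset_sum _ (fun i _ => sphere_integrable' n σm i i)]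
    rw [show (fun a : sphere (0 : EuclideanSpace ℝ (Fin n)) 1 =>
        ∑ i : Fin n, (a : EuclideanSpace ℝ (Fin n)) i * (a : EuclideanSpace ℝ (Fin n)) i) =
        fun _ => (1:ℝ) from funext (sum_coord_sq' n)]
    simp
    rfl
  have hval : ∀ i : Fin n, (∫ ω : sphere (0 : EuclideanSpace ℝ (Fin n)) 1,
      (ω : EuclideanSpace ℝ (Fin n)) i * (ω : EuclideanSpace ℝ (Fin n)) i ∂σm)
      = A * Real.sqrt π ^ (n - 1) / c := by
    intro i
    rw [eq_div_iff hc0]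
    simpa using key i i
  have hS : (σm univ).toReal = n * (A * Real.sqrt π ^ (n - 1) / c) := by
    rw [← hsum, Finset.sum_congr rfl (fun i _ => hval i), Finset.sum_const, Finset.card_univ,
      Fintype.card_fin, nsmul_eq_mul]
  have hn0 : (n:ℝ) ≠ 0 := by positivity
  by_cases hjk : j = k
  · subst hjk
    rw [hval j, if_pos rfl, hS]
    field_simp
  · rw [if_neg hjk, zero_mul]
    have := key j k
    rw [if_neg hjk] at this
    exact (mul_eq_zero.1 this).resolve_right hc0

private lemma det_moment' (n : ℕ)
    (ν : Measure (sphere (0 : EuclideanSpace ℝ (Fin n)) 1)) [IsProbabilityMeasure ν]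
    (hmom : ∀ j k : Fin n, ∫ ω : sphere (0 : EuclideanSpace ℝ (Fin n)) 1,
      (ω : EuclideanSpace ℝ (Fin n)) j * (ω : EuclideanSpace ℝ (Fin n)) k ∂ν
      = if j = k then (n:ℝ)⁻¹ else 0) :
    ∫ v : Fin n → sphere (0 : EuclideanSpace ℝ (Fin n)) 1,
        |(Matrix.of fun i j => (v i : EuclideanSpace ℝ (Fin n)) j).det| ^ 2
        ∂(Measure.pi fun _ => ν) =
      (n.factorial : ℝ) / n ^ n := by
  classical
  have hdet : ∀ v : Fin n → sphere (0 : EuclideanSpace ℝ (Fin n)) 1,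
      |(Matrix.of fun i j => (v i : EuclideanSpace ℝ (Fin n)) j).det| ^ 2 =
      ∑ σ : Equiv.Perm (Fin n), ∑ τ : Equiv.Perm (Fin n),
        (((Equiv.Perm.sign σ : ℤ) : ℝ) * ((Equiv.Perm.sign τ : ℤ) : ℝ)) *
          ∏ i : Fin n, ((v i : EuclideanSpace ℝ (Fin n)) (σ i) *
            (v i : EuclideanSpace ℝ (Fin n)) (τ i)) := by
    intro v
    rw [sq_abs, ← Matrix.det_transpose, Matrix.det_apply', sq, Finset.sum_mul_sum]
    refine Finset.sum_congr rfl fun σ _ => Finset.sum_congr rfl fun τ _ => ?_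
    rw [mul_mul_mul_comm, ← Finset.prod_mul_distrib]
    rfl
  simp_rw [hdet]
  have hint : ∀ σ τ : Equiv.Perm (Fin n), Integrable (fun v : Fin n → sphere (0 : EuclideanSpace ℝ (Fin n)) 1 =>
      (((Equiv.Perm.sign σ : ℤ) : ℝ) * ((Equiv.Perm.sign τ : ℤ) : ℝ)) *
        ∏ i : Fin n, ((v i : EuclideanSpace ℝ (Fin n)) (σ i) *
          (v i : EuclideanSpace ℝ (Fin n)) (τ i))) (Measure.pi fun _ => ν) := by
    intro σ τ
    apply Integrable.const_mul
    have hcont : Continuous (fun v : Fin n → sphere (0 : EuclideanSpace ℝ (Fin n)) 1 =>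
        ∏ i : Fin n, ((v i : EuclideanSpace ℝ (Fin n)) (σ i) *
          (v i : EuclideanSpace ℝ (Fin n)) (τ i))) := by
      apply continuous_finset_prod
      intro i _
      fun_prop
    refine (integrable_const (1:ℝ)).mono' hcont.aestronglyMeasurable ?_
    refine Filter.Eventually.of_forall fun v => ?_
    rw [Real.norm_eq_abs, Finset.abs_prod]
    refine Finset.prod_le_one (fun i _ => abs_nonneg _) fun i _ => ?_
    rw [abs_mul]
    have h1 : ‖(v i : EuclideanSpace ℝ (Fin n))‖ = 1 := by
      simpa using mem_sphere_zero_iff_norm.1 (v i).2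
    have ha := coord_abs_le' n (v i : EuclideanSpace ℝ (Fin n)) (σ i)
    have hb := coord_abs_le' n (v i : EuclideanSpace ℝ (Fin n)) (τ i)
    rw [h1] at ha hb
    exact mul_le_one₀ ha (abs_nonneg _) hb
  rw [integral_finset_sum _ (fun σ _ => integrable_finset_sum _ (fun τ _ => hint σ τ))]
  have hterm : ∀ σ τ : Equiv.Perm (Fin n),
      (∫ v : Fin n → sphere (0 : EuclideanSpace ℝ (Fin n)) 1,
        (((Equiv.Perm.sign σ : ℤ) : ℝ) * ((Equiv.Perm.sign τ : ℤ) : ℝ)) *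
          ∏ i : Fin n, ((v i : EuclideanSpace ℝ (Fin n)) (σ i) *
            (v i : EuclideanSpace ℝ (Fin n)) (τ i)) ∂(Measure.pi fun _ => ν)) =
      if σ = τ then ((n:ℝ)⁻¹) ^ n else 0 := by
    intro σ τ
    rw [MeasureTheory.integral_const_mul]
    letI : MeasureSpace (sphere (0 : EuclideanSpace ℝ (Fin n)) 1) := ⟨ν⟩
    have hpi : (Measure.pi fun _ : Fin n => ν) =
        (volume : Measure (Fin n → sphere (0 : EuclideanSpace ℝ (Fin n)) 1)) :=
      (volume_pi).symm
    rw [hpi]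
    rw [volume_pi, MeasureTheory.integral_fintype_prod_eq_prod
      (fun i (ω : sphere (0 : EuclideanSpace ℝ (Fin n)) 1) => (ω : EuclideanSpace ℝ (Fin n)) (σ i) *
        (ω : EuclideanSpace ℝ (Fin n)) (τ i))]
    have hfac : ∀ i : Fin n, (∫ ω : sphere (0 : EuclideanSpace ℝ (Fin n)) 1,
        (ω : EuclideanSpace ℝ (Fin n)) (σ i) *
        (ω : EuclideanSpace ℝ (Fin n)) (τ i)) = if σ i = τ i then (n:ℝ)⁻¹ else 0 :=
      fun i => hmom (σ i) (τ i)
    rw [Finset.prod_congr rfl fun i _ => hfac i]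
    by_cases hστ : σ = τ
    · subst hστ
      simp only [if_pos rfl, Finset.prod_const, Finset.card_univ, Fintype.card_fin]
      have hsgn : ((Equiv.Perm.sign σ : ℤ) : ℝ) * ((Equiv.Perm.sign σ : ℤ) : ℝ) = 1 := by
        rcases Int.units_eq_one_or (Equiv.Perm.sign σ) with h | h <;> rw [h] <;> norm_num
      rw [hsgn, one_mul]
      simp
    · rw [if_neg hστ]
      obtain ⟨i, hi⟩ : ∃ i, σ i ≠ τ i := by
        by_contra h
        push_neg at h
        exact hστ (Equiv.ext h)
      rw [Finset.prod_eq_zero (Finset.mem_univ i) (by rw [if_neg hi]), mul_zero]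
  rw [Finset.sum_congr rfl fun σ _ => integral_finset_sum _ (fun τ _ => hint σ τ)]
  rw [Finset.sum_congr rfl fun σ _ => Finset.sum_congr rfl fun τ _ => hterm σ τ]
  rw [Finset.sum_congr rfl fun σ _ => Finset.sum_ite_eq univ σ (fun _ => ((n:ℝ)⁻¹)^n)]
  simp only [Finset.mem_univ, if_true, Finset.sum_const, Finset.card_univ, Fintype.card_perm,
    Fintype.card_fin, nsmul_eq_mul]
  rw [inv_pow, div_eq_mul_inv]

private lemma gamma_rhs1' (n : ℕ) (hn : 2 ≤ n) :
    (Gamma ((n : ℝ) / 2) / Gamma (((n : ℝ) + 2) / 2)) ^ (n - 1) *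
      (Gamma (((n : ℝ) + 1) / 2) * Gamma ((n : ℝ) / 2) / Gamma (1 / 2)) =
    (n.factorial : ℝ) / n ^ n := by
  obtain ⟨m, rfl⟩ : ∃ m, n = m + 1 := ⟨n - 1, by omega⟩
  have hm1 : (1:ℕ) ≤ m := by omega
  have hhalf : (0:ℝ) < ((m:ℝ) + 1) / 2 := by positivity
  have hG : Gamma (((m:ℝ) + 1 + 2) / 2) = (((m:ℝ)+1)/2) * Gamma (((m:ℝ)+1)/2) := by
    rw [show ((m:ℝ) + 1 + 2) / 2 = ((m:ℝ)+1)/2 + 1 by ring, Real.Gamma_add_one hhalf.ne']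
  have hdup := Real.Gamma_mul_Gamma_add_half (((m:ℝ)+1)/2)
  rw [show ((m:ℝ)+1)/2 + 1/2 = ((m:ℝ)+1+1)/2 by ring] at hdup
  have hGn : Gamma ((m:ℝ) + 1) = (m.factorial : ℝ) := by
    rw [show ((m:ℝ) + 1) = ((m:ℕ):ℝ) + 1 by ring, Real.Gamma_nat_eq_factorial]
  rw [show (2:ℝ) * (((m:ℝ)+1)/2) = (m:ℝ)+1 by ring] at hdup
  have h2r : (2:ℝ) ^ (1 - ((m:ℝ)+1)) = 2 / 2 ^ (m+1 : ℕ) := by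
    rw [show (1 - ((m:ℝ)+1)) = 1 - ((m+1:ℕ):ℝ) by push_cast; ring,
      Real.rpow_sub two_pos, Real.rpow_one, Real.rpow_natCast]
  rw [h2r, hGn] at hdup
  have hGpos := Real.Gamma_pos_of_pos hhalf
  have hGpos2 := Real.Gamma_pos_of_pos (show (0:ℝ) < ((m:ℝ)+1+1)/2 by positivity)
  simp only [Nat.cast_add, Nat.cast_one]
  rw [hG, Real.Gamma_one_half_eq]
  have hsπ : Real.sqrt π > 0 := Real.sqrt_pos.2 pi_pos
  have key : Gamma (((m:ℝ)+1+1)/2) * Gamma (((m:ℝ)+1)/2) =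
      (m.factorial : ℝ) * (2 / 2 ^ (m+1:ℕ)) * Real.sqrt π := by
    rw [mul_comm]; exact hdup
  rw [key]
  have hne : Gamma (((m:ℝ)+1)/2) ≠ 0 := hGpos.ne'
  have hmn0 : ((m:ℝ)+1) ≠ 0 := by positivity
  rw [Nat.add_sub_cancel]
  have hfac : ((m+1).factorial : ℝ) = ((m:ℝ)+1) * (m.factorial : ℝ) := by
    rw [Nat.factorial_succ]; push_cast; ring
  rw [hfac]
  rw [div_pow, mul_pow]
  field_simp
  rw [div_pow]; field_simp; ring

private lemma gamma_rhs2' (n : ℕ) (hn : 2 ≤ n) :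
    ((n:ℝ) * (Real.sqrt π ^ n / Gamma ((n:ℝ)/2 + 1))) ^ n * ((n.factorial : ℝ) / n ^ n) =
      Gamma ((n : ℝ) + 1) * π ^ ((n : ℝ) ^ 2 / 2) / Gamma (((n : ℝ) + 2) / 2) ^ n := by
  have hππ : π ^ ((n:ℝ)^2/2) = Real.sqrt π ^ (n^2 : ℕ) := by
    rw [show ((n:ℝ)^2/2) = (1/2) * ((n^2 : ℕ):ℝ) by push_cast; ring,
      Real.rpow_mul pi_pos.le, Real.rpow_natCast, Real.sqrt_eq_rpow]
  have hG : Gamma (((n:ℝ)+2)/2) = Gamma ((n:ℝ)/2 + 1) := by norm_num [add_div]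
  have hGn : Gamma ((n:ℝ) + 1) = (n.factorial : ℝ) := by
    rw [show ((n:ℝ) + 1) = ((n:ℕ):ℝ) + 1 by norm_num, Real.Gamma_nat_eq_factorial]
  have hGpos : 0 < Gamma ((n:ℝ)/2 + 1) := Real.Gamma_pos_of_pos (by positivity)
  have hn0 : ((n:ℝ)) ≠ 0 := by positivity
  rw [hππ, hG, hGn]
  rw [mul_pow, div_pow, ← pow_mul, show n * n = n ^ 2 by ring]
  field_simp

end Aux

/-- Second moment of the volume of the parallelotope spanned by `n ≥ 2` iid uniform random
unit vectors in `ℝⁿ`: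
`E[V²] = (Γ(n/2)/Γ((n+2)/2))^{n-1} · Γ((n+1)/2)Γ(n/2)/Γ(1/2)`, and with respect to the
unnormalized surface measures on the spheres,
`∫_{(S^{n-1})^n} |det ν|² dμ = Γ(n+1) π^{n²/2} / Γ((n+2)/2)^n`. -/
theorem parallelotope_second_moment (n : ℕ) (hn : 2 ≤ n)
    (μS : Measure (Metric.sphere (0 : EuclideanSpace ℝ (Fin n)) 1))
    (hμS : μS = (volume : Measure (EuclideanSpace ℝ (Fin n))).toSphere) :
    (∫ v : Fin n → Metric.sphere (0 : EuclideanSpace ℝ (Fin n)) 1,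
          |(Matrix.of fun i j => (v i : EuclideanSpace ℝ (Fin n)) j).det| ^ 2
          ∂(Measure.pi fun _ => (μS Set.univ)⁻¹ • μS) =
        (Gamma ((n : ℝ) / 2) / Gamma (((n : ℝ) + 2) / 2)) ^ (n - 1) *
          (Gamma (((n : ℝ) + 1) / 2) * Gamma ((n : ℝ) / 2) / Gamma (1 / 2))) ∧
      ∫ v : Fin n → Metric.sphere (0 : EuclideanSpace ℝ (Fin n)) 1,
          |(Matrix.of fun i j => (v i : EuclideanSpace ℝ (Fin n)) j).det| ^ 2
          ∂(Measure.pi fun _ => μS) =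
        Gamma ((n : ℝ) + 1) * π ^ ((n : ℝ) ^ 2 / 2) / Gamma (((n : ℝ) + 2) / 2) ^ n := by
  subst hμS
  haveI : Nonempty (Fin n) := ⟨⟨0, by omega⟩⟩
  haveI : Nontrivial (EuclideanSpace ℝ (Fin n)) := inferInstance
  set σm := (volume : Measure (EuclideanSpace ℝ (Fin n))).toSphere with hσm
  have hdim : Module.finrank ℝ (EuclideanSpace ℝ (Fin n)) = n := finrank_euclideanSpace_fin
  have huniv : σm Set.univ = n * volume (Metric.ball (0 : EuclideanSpace ℝ (Fin n)) 1) := by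
    rw [hσm, Measure.toSphere_apply_univ, hdim]
  have hball : volume (Metric.ball (0 : EuclideanSpace ℝ (Fin n)) 1) =
      ENNReal.ofReal (Real.sqrt π ^ n / Gamma ((n:ℝ)/2 + 1)) := by
    rw [EuclideanSpace.volume_ball, Fintype.card_fin]
    simp
  have hballpos : volume (Metric.ball (0 : EuclideanSpace ℝ (Fin n)) 1) ≠ 0 :=
    (Metric.measure_ball_pos volume _ one_pos).ne'
  have h0 : σm Set.univ ≠ 0 := by
    rw [huniv]
    exact mul_ne_zero (by simp; omega) hballpos
  have htop : σm Set.univ ≠ ⊤ := measure_ne_top σm _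
  have hSpos : 0 < (σm Set.univ).toReal := ENNReal.toReal_pos h0 htop
  set ν := (σm Set.univ)⁻¹ • σm with hν
  haveI : IsProbabilityMeasure ν := by
    constructor
    rw [hν, Measure.smul_apply, smul_eq_mul, ENNReal.inv_mul_cancel h0 htop]
  have hmom : ∀ j k : Fin n, ∫ ω : Metric.sphere (0 : EuclideanSpace ℝ (Fin n)) 1,
      (ω : EuclideanSpace ℝ (Fin n)) j * (ω : EuclideanSpace ℝ (Fin n)) k ∂ν
      = if j = k then (n:ℝ)⁻¹ else 0 := by
    intro j k
    rw [hν, integral_smul_measure, sphere_moment' n hn j k, ENNReal.toReal_inv, smul_eq_mul]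
    have hS' : ((volume : Measure (EuclideanSpace ℝ (Fin n))).toSphere Set.univ).toReal ≠ 0 :=
      hSpos.ne'
    have hn0 : (n:ℝ) ≠ 0 := by positivity
    rcases eq_or_ne j k with rfl | hjk
    · simp only [if_pos rfl]
      field_simp
      rw [huniv, ENNReal.toReal_mul, ENNReal.toReal_natCast]
      ring
    · simp only [if_neg hjk]
      simp
  have hE1 : ∫ v : Fin n → Metric.sphere (0 : EuclideanSpace ℝ (Fin n)) 1,
      |(Matrix.of fun i j => (v i : EuclideanSpace ℝ (Fin n)) j).det| ^ 2
      ∂(Measure.pi fun _ => ν) = (n.factorial : ℝ) / n ^ n := det_moment' n ν hmom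
  constructor
  · rw [hE1, gamma_rhs1' n hn]
  · have hpismul : (Measure.pi fun _ : Fin n => σm) = (σm Set.univ) ^ n •
        (Measure.pi fun _ : Fin n => ν) := by
      refine Measure.pi_eq fun s hs => ?_
      rw [Measure.smul_apply, Measure.pi_pi, smul_eq_mul]
      have : ∀ i : Fin n, ν (s i) = (σm Set.univ)⁻¹ * σm (s i) := fun i => by
        rw [hν, Measure.smul_apply, smul_eq_mul]
      rw [Finset.prod_congr rfl fun i _ => this i, Finset.prod_mul_distrib, Finset.prod_const,
        Finset.card_univ, Fintype.card_fin, ← mul_assoc, ← mul_pow,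
        ENNReal.mul_inv_cancel h0 htop, one_pow, one_mul]
    rw [hpismul, integral_smul_measure, hE1, ENNReal.toReal_pow, smul_eq_mul]
    have hStoReal : (σm Set.univ).toReal = (n:ℝ) * (Real.sqrt π ^ n / Gamma ((n:ℝ)/2 + 1)) := by
      rw [huniv, hball, ENNReal.toReal_mul, ENNReal.toReal_natCast,
        ENNReal.toReal_ofReal (by positivity)]
    rw [hStoReal, gamma_rhs2' n hn]
end

section
/- For positive integers n and 1 ≤ j ≤ n, the product of one-dimensional sine-power integrals satisfies Π_{j=1}^{n} ∫_0^π (sin θ)^{2n+1-j} dθ = π^{⌈n/2⌉} 2^{⌊n/2⌋} (n!!)/(2n)!!. -/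
open Real Finset intervalIntegral

/-! Writing `I m = ∫₀^π sin^m`, the reduction formula `I (m + 2) = (m + 1) / (m + 2) * I m` and
`I 0 = π`, `I 1 = 2` give `I m = c m * (m - 1)‼ / m‼` with `c m = π` for even `m` and `c m = 2` for
odd `m`. The exponents `2n + 1 - j` run over `n + 1, …, 2n`; along this range the double-factorial
ratios telescope to `n‼ / (2n)‼`, and it contains `⌈n/2⌉` even and `⌊n/2⌋` odd numbers. -/

open scoped Nat

theorem integral_sin_pow_add_two (m : ℕ) :
    ∫ θ in (0:ℝ)..π, sin θ ^ (m + 2) = (m + 1) / (m + 2) * ∫ θ in (0:ℝ)..π, sin θ ^ m := by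
  simp [integral_sin_pow]

theorem integral_sin_pow_eq_doubleFactorial (m : ℕ) :
    ∫ θ in (0:ℝ)..π, sin θ ^ m = (if Even m then π else 2) * ((m - 1)‼ / m‼ : ℝ) := by
  induction m using Nat.twoStepInduction with
  | zero => simp
  | one => norm_num
  | more m ih _ =>
    rw [integral_sin_pow_add_two, ih, show m + 2 - 1 = m + 1 from rfl, Nat.doubleFactorial_add_one,
      Nat.doubleFactorial_add_two]
    simp only [Nat.even_add, even_two, iff_true]
    push_cast
    field_simp

theorem prod_Ico_doubleFactorial_pred_div {a b : ℕ} (hab : a ≤ b) :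
    ∏ m ∈ Ico a b, ((m - 1)‼ / m‼ : ℝ) = (a - 1)‼ / (b - 1)‼ := by
  induction b, hab using Nat.le_induction with
  | base =>
    simp [div_self (show ((a - 1)‼ : ℝ) ≠ 0 by positivity)]
  | succ b hab ih =>
    rw [prod_Ico_succ_top hab, ih, div_mul_div_cancel₀ (by positivity), add_tsub_cancel_right]

theorem prod_range_ite_even {M : Type*} [CommMonoid M] (a b : M) (N : ℕ) :
    ∏ m ∈ range N, (if Even m then a else b) = a ^ ((N + 1) / 2) * b ^ (N / 2) := by
  induction N using Nat.twoStepInduction with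
  | zero => simp
  | one => simp
  | more N ih _ =>
    have hpair : (if Even N then a else b) * (if Even (N + 1) then a else b) = a * b := by
      rcases Nat.even_or_odd N with h | h
      · simp [h, Nat.even_add_one]
      · simp [Nat.not_even_iff_odd.2 h, h, mul_comm]
    rw [prod_range_succ, prod_range_succ, ih, mul_assoc, hpair,
      show (N + 2 + 1) / 2 = (N + 1) / 2 + 1 by omega, show (N + 2) / 2 = N / 2 + 1 by omega,
      pow_succ, pow_succ, mul_mul_mul_comm]

theorem prod_Ico_ite_even {M : Type*} [CommMonoidWithZero M] [IsCancelMulZero M] {a b : M}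
    (ha : a ≠ 0) (hb : b ≠ 0) (n : ℕ) :
    ∏ m ∈ Ico (n + 1) (2 * n + 1), (if Even m then a else b) = a ^ ((n + 1) / 2) * b ^ (n / 2) := by
  have hsplit := prod_range_mul_prod_Ico (fun m ↦ if Even m then a else b)
    (by omega : n + 1 ≤ 2 * n + 1)
  rw [prod_range_ite_even, prod_range_ite_even,
    show (2 * n + 1 + 1) / 2 = (n + 1 + 1) / 2 + (n + 1) / 2 by omega,
    show (2 * n + 1) / 2 = (n + 1) / 2 + n / 2 by omega, pow_add, pow_add,
    mul_mul_mul_comm] at hsplit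
  exact mul_left_cancel₀ (mul_ne_zero (pow_ne_zero _ ha) (pow_ne_zero _ hb)) hsplit

theorem sine_power_integral_product_general (n : ℕ) :
    ∏ j ∈ Finset.Icc 1 n, ∫ θ in (0:ℝ)..π, (sin θ) ^ (2 * n + 1 - j) =
      π ^ ((n + 1) / 2) * 2 ^ (n / 2) *
        (Nat.doubleFactorial n : ℝ) / (Nat.doubleFactorial (2 * n) : ℝ) := by
  rw [← Ico_add_one_right_eq_Icc,
    prod_Ico_reflect (fun m ↦ ∫ θ in (0:ℝ)..π, sin θ ^ m) 1 (by omega : n + 1 ≤ 2 * n + 1 + 1),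
    show 2 * n + 1 + 1 - (n + 1) = n + 1 by omega, show 2 * n + 1 + 1 - 1 = 2 * n + 1 by omega]
  simp_rw [integral_sin_pow_eq_doubleFactorial, prod_mul_distrib,
    prod_Ico_ite_even pi_ne_zero two_ne_zero,
    prod_Ico_doubleFactorial_pred_div (by omega : n + 1 ≤ 2 * n + 1)]
  simp [mul_div_assoc]

/-- `∏_{j=1}^{n} ∫_0^π (sin θ)^{2n+1-j} dθ = π^{⌈n/2⌉} 2^{⌊n/2⌋} n‼/(2n)‼`. -/
theorem sine_power_integral_product (n : ℕ) (hn : 1 ≤ n) :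
    ∏ j ∈ Finset.Icc 1 n, ∫ θ in (0:ℝ)..π, (sin θ) ^ (2 * n + 1 - j) =
      π ^ ((n + 1) / 2) * 2 ^ (n / 2) *
        (Nat.doubleFactorial n : ℝ) / (Nat.doubleFactorial (2 * n) : ℝ) :=
  sine_power_integral_product_general n
end

section
/- Let C be the 2(n+1)×2(n+1) symmetric block matrix C = [[A₊, Bᵀ],[B, A₋]], where A₊ and A₋ are the (n+1)×(n+1) matrices whose only nonzero entries are: (1,1)-entry α, (n+1,n+1)-entry γ, (i,i) = β for 2 ≤ i ≤ n, and (1,n+1) = (n+1,1) = ±δ; and B has (1,1)-entry μ, (n+1,n+1)-entry τ, (i,i) = η for 2 ≤ i ≤ n, (1,n+1)-entry ν, and (n+1,1)-entry −ν. Then det(C) = (β²−η²)^{n-1} · (αγ − ατ − δ² − 2δν + γμ − μτ − ν²) · (αγ + ατ − δ² + 2δν − γμ − μτ − ν²). -/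
/-!
Index the rows and columns of each `(n+1) × (n+1)` block by its two endpoints `0, n` and its
`n - 1` interior indices. Every block is then block diagonal: a `2 × 2` corner matrix plus a
scalar diagonal. Interleaving the two block rows splits `C` into the `4 × 4` matrix built from
the corners and `n - 1` copies of `!![β, η; η, β]`, whose determinants multiply.
-/

def finEndsSum (m : ℕ) : Fin 2 ⊕ Fin m → Fin (m + 2) :=
  Sum.elim ![0, Fin.last (m + 1)] fun k => k.castSucc.succ

theorem finEndsSum_injective (m : ℕ) : Function.Injective (finEndsSum m) := by
  rintro (i | i) (j | j) h
  · fin_cases i <;> fin_cases j <;> simp_all [finEndsSum, Fin.ext_iff]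
  · fin_cases i <;> simp [finEndsSum, Fin.ext_iff, j.isLt.ne'] at h
  · fin_cases j <;> simp [finEndsSum, Fin.ext_iff, i.isLt.ne] at h
  · simpa [finEndsSum, Fin.ext_iff] using h

noncomputable def finEndsSumEquiv (m : ℕ) : Fin 2 ⊕ Fin m ≃ Fin (m + 2) :=
  .ofBijective (finEndsSum m) ((Fintype.bijective_iff_injective_and_card _).2
    ⟨finEndsSum_injective m, by simp [add_comm]⟩)

open Matrix

namespace Matrix

theorem fromBlocks_submatrix_sumCongr {ι κ ι' κ' α : Type*} (A : Matrix ι ι α)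
    (B : Matrix ι κ α) (C : Matrix κ ι α) (D : Matrix κ κ α) (e₁ : ι' ≃ ι) (e₂ : κ' ≃ κ) :
    (fromBlocks A B C D).submatrix (e₁.sumCongr e₂) (e₁.sumCongr e₂) =
      fromBlocks (A.submatrix e₁ e₁) (B.submatrix e₁ e₂) (C.submatrix e₂ e₁)
        (D.submatrix e₂ e₂) := by
  ext (i | i) (j | j) <;> rfl

section cornerDiagonal

variable {α : Type*} [Zero α]

def cornerDiagonal {n : ℕ} (a b c x y : α) : Matrix (Fin (n + 1)) (Fin (n + 1)) α :=
  fun i j =>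
    if i = j then (if i = 0 then a else if i = Fin.last n then c else b)
    else if i = 0 ∧ j = Fin.last n then x
    else if i = Fin.last n ∧ j = 0 then y else 0

theorem cornerDiagonal_transpose {n : ℕ} (a b c x y : α) :
    (cornerDiagonal (n := n) a b c x y)ᵀ = cornerDiagonal a b c y x := by
  ext i j
  simp only [transpose_apply, cornerDiagonal]
  by_cases hij : i = j
  · subst hij
    simp
  · simp only [hij, Ne.symm hij, if_false]
    split_ifs <;> simp_all

theorem cornerDiagonal_submatrix_finEndsSumEquiv (m : ℕ) (a b c x y : α) :
    (cornerDiagonal (n := m + 1) a b c x y).submatrix (finEndsSumEquiv m) (finEndsSumEquiv m) =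
      fromBlocks !![a, x; y, c] 0 0 (diagonal fun _ => b) := by
  ext (i | i) (j | j)
  · fin_cases i <;> fin_cases j <;> simp [finEndsSumEquiv, finEndsSum, cornerDiagonal]
  · fin_cases i <;>
      simp [finEndsSumEquiv, finEndsSum, cornerDiagonal, Fin.ext_iff, j.isLt.ne, j.isLt.ne']
  · fin_cases j <;> simp [finEndsSumEquiv, finEndsSum, cornerDiagonal, Fin.ext_iff, i.isLt.ne]
  · simp [finEndsSumEquiv, finEndsSum, cornerDiagonal, Fin.ext_iff, diagonal_apply, i.isLt.ne]

end cornerDiagonal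

section det

variable {R : Type*} [CommRing R]

variable {ι₁ ι₂ κ₁ κ₂ : Type*} [Fintype ι₁] [Fintype ι₂] [Fintype κ₁] [Fintype κ₂]
  [DecidableEq ι₁] [DecidableEq ι₂] [DecidableEq κ₁] [DecidableEq κ₂]

theorem det_fromBlocks_fromBlocks_zero (A₁ : Matrix ι₁ ι₁ R) (A₂ : Matrix ι₂ ι₂ R)
    (B₁ : Matrix ι₁ κ₁ R) (B₂ : Matrix ι₂ κ₂ R) (C₁ : Matrix κ₁ ι₁ R) (C₂ : Matrix κ₂ ι₂ R)
    (D₁ : Matrix κ₁ κ₁ R) (D₂ : Matrix κ₂ κ₂ R) :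
    (fromBlocks (fromBlocks A₁ 0 0 A₂) (fromBlocks B₁ 0 0 B₂)
      (fromBlocks C₁ 0 0 C₂) (fromBlocks D₁ 0 0 D₂)).det =
      (fromBlocks A₁ B₁ C₁ D₁).det * (fromBlocks A₂ B₂ C₂ D₂).det := by
  rw [← det_submatrix_equiv_self (Equiv.sumSumSumComm ι₁ ι₂ κ₁ κ₂).symm,
    ← det_fromBlocks_zero₂₁ _ 0]
  congr 1
  ext ((i | i) | (i | i)) ((j | j) | (j | j)) <;> rfl

theorem det_fromBlocks_diagonal {ι : Type*} [Fintype ι] [DecidableEq ι] (a b c d : ι → R) :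
    (fromBlocks (diagonal a) (diagonal b) (diagonal c) (diagonal d)).det =
      ∏ i, (a i * d i - b i * c i) := by
  let σ := (finTwoEquiv.prodCongr (Equiv.refl ι)).trans (Equiv.boolProdEquivSum ι)
  have h : (fromBlocks (diagonal a) (diagonal b) (diagonal c) (diagonal d)).submatrix σ σ =
      blockDiagonal fun i => !![a i, b i; c i, d i] := by
    ext ⟨k, i⟩ ⟨l, j⟩
    fin_cases k <;> fin_cases l <;> by_cases hij : i = j <;>
      simp [σ, finTwoEquiv, blockDiagonal_apply, hij]
  rw [← det_submatrix_equiv_self σ, h, det_blockDiagonal]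
  simp only [det_fin_two_of]

theorem det_fromBlocks_corners (α γ δ μ ν τ : R) :
    (fromBlocks !![α, δ; δ, γ] !![μ, -ν; ν, τ] !![μ, ν; -ν, τ] !![α, -δ; -δ, γ]).det =
      (α * γ - α * τ - δ ^ 2 - 2 * δ * ν + γ * μ - μ * τ - ν ^ 2) *
        (α * γ + α * τ - δ ^ 2 + 2 * δ * ν - γ * μ - μ * τ - ν ^ 2) := by
  have h : reindex finSumFinEquiv finSumFinEquiv
      (fromBlocks !![α, δ; δ, γ] !![μ, -ν; ν, τ] !![μ, ν; -ν, τ] !![α, -δ; -δ, γ]) =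
      !![α, δ, μ, -ν; δ, γ, ν, τ; μ, ν, α, -δ; -ν, τ, -δ, γ] := by
    ext i j
    fin_cases i <;> fin_cases j <;> rfl
  rw [← det_reindex_self finSumFinEquiv, h, det_succ_row_zero]
  simp [Fin.sum_univ_succ, det_fin_three, Fin.succAbove]
  ring

end det

end Matrix

/-- Determinant of the structured `2(n+1) × 2(n+1)` covariance-type block matrix
`C = [[A₊, Bᵀ],[B, A₋]]`. -/
theorem structured_block_det (n : ℕ) (hn : 1 ≤ n) (α β γ δ μ ν η τ : ℝ)
    (Aplus Aminus B : Matrix (Fin (n + 1)) (Fin (n + 1)) ℝ)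
    (hAplus : Aplus = fun i j =>
      if i = j then (if i = 0 then α else if i = Fin.last n then γ else β)
      else if (i = 0 ∧ j = Fin.last n) ∨ (i = Fin.last n ∧ j = 0) then δ else 0)
    (hAminus : Aminus = fun i j =>
      if i = j then (if i = 0 then α else if i = Fin.last n then γ else β)
      else if (i = 0 ∧ j = Fin.last n) ∨ (i = Fin.last n ∧ j = 0) then -δ else 0)
    (hB : B = fun i j =>
      if i = j then (if i = 0 then μ else if i = Fin.last n then τ else η)
      else if i = 0 ∧ j = Fin.last n then ν
      else if i = Fin.last n ∧ j = 0 then -ν else 0) :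
    (Matrix.fromBlocks Aplus Bᵀ B Aminus).det =
      (β ^ 2 - η ^ 2) ^ (n - 1) *
        (α * γ - α * τ - δ ^ 2 - 2 * δ * ν + γ * μ - μ * τ - ν ^ 2) *
        (α * γ + α * τ - δ ^ 2 + 2 * δ * ν - γ * μ - μ * τ - ν ^ 2) := by
  obtain ⟨m, rfl⟩ : ∃ m, n = m + 1 := ⟨n - 1, by omega⟩
  have hAp : Aplus = cornerDiagonal α β γ δ δ := by simp only [hAplus, ite_or]; rfl
  have hAm : Aminus = cornerDiagonal α β γ (-δ) (-δ) := by
    simp only [hAminus, ite_or]; rfl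
  have hB' : B = cornerDiagonal μ η τ ν (-ν) := hB
  have hBt : Bᵀ = cornerDiagonal μ η τ (-ν) ν := by rw [hB', cornerDiagonal_transpose]
  rw [← det_submatrix_equiv_self ((finEndsSumEquiv m).sumCongr (finEndsSumEquiv m)),
    fromBlocks_submatrix_sumCongr, hAp, hAm, hBt, hB']
  simp only [cornerDiagonal_submatrix_finEndsSumEquiv, det_fromBlocks_fromBlocks_zero,
    det_fromBlocks_corners, det_fromBlocks_diagonal, Finset.prod_const, Finset.card_univ,
    Fintype.card_fin, Nat.add_sub_cancel]
  ring
end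

section
/- For all r > 0, the quantity (e^r − e^{2r})(r² + 3) + e^{3r} − 1 is strictly positive. -/
/-!
With `A = exp r` the quantity factors as `(A - 1) * ((A - 1) ^ 2 - r ^ 2 * A)`, and
`(exp r - 1) ^ 2 = exp r * (2 * sinh (r / 2)) ^ 2`, so its positivity reduces to `exp r > 1`
and `sinh y > y` for `y = r / 2 > 0`.
-/

open Real

theorem sq_exp_sub_one_eq (r : ℝ) : (exp r - 1) ^ 2 = exp r * (2 * sinh (r / 2)) ^ 2 := by
  have hsplit : exp r = exp (r / 2) ^ 2 := by rw [← exp_nat_mul]; ring_nf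
  have hinv : exp (-(r / 2)) * exp (r / 2) = 1 := by rw [← exp_add]; simp
  rw [sinh_eq, hsplit]
  linear_combination (2 * exp (r / 2) ^ 2 - 1 - exp (-(r / 2)) * exp (r / 2)) * hinv

theorem sq_mul_exp_lt_sq_exp_sub_one {r : ℝ} (hr : 0 < r) : r ^ 2 * exp r < (exp r - 1) ^ 2 := by
  have hsinh : r < 2 * sinh (r / 2) := by linarith [self_lt_sinh_iff.mpr (half_pos hr)]
  rw [sq_exp_sub_one_eq, mul_comm]
  gcongr

/-- For all `r > 0`, `(e^r − e^{2r})(r² + 3) + e^{3r} − 1 > 0`. -/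
theorem block_det_pos (r : ℝ) (hr : 0 < r) :
    0 < (exp r - exp (2 * r)) * (r ^ 2 + 3) + exp (3 * r) - 1 := by
  have hfactor : (exp r - exp (2 * r)) * (r ^ 2 + 3) + exp (3 * r) - 1
      = (exp r - 1) * ((exp r - 1) ^ 2 - r ^ 2 * exp r) := by
    rw [show 2 * r = (2 : ℕ) * r by norm_num, show 3 * r = (3 : ℕ) * r by norm_num,
      exp_nat_mul, exp_nat_mul]
    ring
  rw [hfactor]
  exact mul_pos (sub_pos.mpr (one_lt_exp_iff.mpr hr)) (sub_pos.mpr (sq_mul_exp_lt_sq_exp_sub_one hr))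
end

section
/- For any positive definite m·n² × m·n² matrix A, the map B ↦ ∫_{R^{mn²}} Π_{i=1}^m |det ξ^i| e^{-(Bu,u)/2} du is Hölder continuous of exponent 1/2 at A: for all B sufficiently close to A, |∫ Π|det ξ^i| e^{-(Bu,u)/2} du − ∫ Π|det ξ^i| e^{-(Au,u)/2} du| = O(||A − B||_∞^{1/2}), where ||·||_∞ denotes the maximum absolute value of the entries. -/
open Real MeasureTheory Matrix

/-!
Positive definiteness gives `c‖u‖² ≤ (Au, u)` with `c > 0`, and an entrywise perturbation of
size `δ` changes the quadratic form by at most `δ N ‖u‖²` (`N` the dimension). For `δ` small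
both forms are therefore coercive with constant `c / 2`, and `|e^{-x} - e^{-y}| ≤ |x - y| e^{-a}`
for `x, y ≥ a` bounds the difference of the integrands by `δ` times a polynomial times a
Gaussian. Since `|det ξ| ≤ n! ‖u‖ⁿ`, the weight `∏ |det ξⁱ|` grows polynomially, so the
difference of the integrals is even `O(δ)`, and `δ ≤ √ε √δ` gives the `√δ` bound.
-/

theorem Real.abs_exp_neg_sub_exp_neg_le {a x y : ℝ} (hx : a ≤ x) (hy : a ≤ y) :
    |exp (-x) - exp (-y)| ≤ |x - y| * exp (-a) := by
  wlog hyx : y ≤ x generalizing x y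
  · rw [abs_sub_comm, abs_sub_comm x]
    exact this hy hx (le_of_not_ge hyx)
  have hsplit : exp (-y) - exp (-x) = exp (-y) * (1 - exp (-(x - y))) := by
    rw [mul_sub, ← exp_add]; ring_nf
  have hdecay : exp (-(x - y)) ≤ 1 := exp_le_one_iff.2 (by linarith)
  rw [abs_sub_comm, abs_of_nonneg (by linarith [exp_le_exp.2 (neg_le_neg hyx)]),
    abs_of_nonneg (sub_nonneg.2 hyx), hsplit, mul_comm (x - y)]
  exact mul_le_mul (exp_le_exp.2 (by linarith)) (by linarith [one_sub_le_exp_neg (x - y)])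
    (by linarith) (exp_pos _).le

theorem integrable_norm_pow_mul_exp_neg_mul_sq {E : Type*} [NormedAddCommGroup E]
    [NormedSpace ℝ E] [FiniteDimensional ℝ E] [MeasurableSpace E] [BorelSpace E]
    (μ : Measure E) [μ.IsAddHaarMeasure] (k : ℕ) {b : ℝ} (hb : 0 < b) :
    Integrable (fun x : E => ‖x‖ ^ k * exp (-b * ‖x‖ ^ 2)) μ := by
  rcases subsingleton_or_nontrivial E with hE | hE
  · have : IsFiniteMeasure μ := CompactSpace.isFiniteMeasure
    exact Integrable.of_finite
  rw [integrable_fun_norm_addHaar μ (f := fun t => t ^ k * exp (-b * t ^ 2))]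
  refine (integrableOn_rpow_mul_exp_neg_mul_sq hb (s := (Module.finrank ℝ E - 1 + k : ℕ))
    (neg_one_lt_zero.trans_le (Nat.cast_nonneg _))).congr_fun (fun t _ => ?_) measurableSet_Ioi
  simp only [rpow_natCast, pow_add, smul_eq_mul]
  ring

section QuadraticForm

variable {ι : Type*} [Fintype ι]

theorem Matrix.PosDef.exists_pos_mul_norm_sq_le {A : Matrix ι ι ℝ} (hA : A.PosDef) :
    ∃ c > 0, ∀ u : EuclideanSpace ℝ ι, c * ‖u‖ ^ 2 ≤ A *ᵥ u ⬝ᵥ u := by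
  rcases subsingleton_or_nontrivial (EuclideanSpace ℝ ι) with hE | hE
  · exact ⟨1, one_pos, fun u => by simp [Subsingleton.elim u 0]⟩
  have hpos : ∀ u : EuclideanSpace ℝ ι, u ≠ 0 → 0 < A *ᵥ u ⬝ᵥ u := fun u hu => by
    simpa [dotProduct_comm] using
      hA.dotProduct_mulVec_pos (x := u.ofLp) (by simpa using hu)
  obtain ⟨x₀, hx₀, hmin⟩ := (isCompact_sphere (0 : EuclideanSpace ℝ ι) 1).exists_isMinOn
    (NormedSpace.sphere_nonempty.2 zero_le_one) (f := fun u : EuclideanSpace ℝ ι => A *ᵥ u ⬝ᵥ u)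
    (Continuous.continuousOn (by fun_prop))
  refine ⟨_, hpos x₀ (ne_zero_of_mem_unit_sphere ⟨x₀, hx₀⟩), fun u => ?_⟩
  rcases eq_or_ne u 0 with rfl | hu
  · simp
  have hnorm : 0 < ‖u‖ := norm_pos_iff.2 hu
  have hscale := isMinOn_iff.1 hmin _ (show ‖u‖⁻¹ • u ∈ Metric.sphere 0 1 by
    simp [norm_smul, hnorm.ne'])
  simp only [WithLp.ofLp_smul, mulVec_smul, smul_dotProduct, dotProduct_smul,
    smul_eq_mul] at hscale
  have := mul_le_mul_of_nonneg_right hscale (sq_nonneg ‖u‖)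
  field_simp at this
  linarith

theorem abs_mulVec_dotProduct_sub_le {A B : Matrix ι ι ℝ} {δ : ℝ} (hδ : 0 ≤ δ)
    (hAB : ∀ j k, |A j k - B j k| ≤ δ) (u : EuclideanSpace ℝ ι) :
    |A *ᵥ u ⬝ᵥ u - B *ᵥ u ⬝ᵥ u| ≤ δ * Fintype.card ι * ‖u‖ ^ 2 := by
  have hexpand : A *ᵥ u ⬝ᵥ u - B *ᵥ u ⬝ᵥ u = ∑ j, ∑ k, (A j k - B j k) * (u k * u j) := by
    simp only [dotProduct, mulVec, Finset.sum_mul, ← Finset.sum_sub_distrib, ← sub_mul,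
      mul_assoc]
  have hcauchy : (∑ i, |u i|) ^ 2 ≤ Fintype.card ι * ‖u‖ ^ 2 := by
    simpa [EuclideanSpace.norm_sq_eq] using
      sq_sum_le_card_mul_sum_sq (s := Finset.univ) (f := fun i => |u i|)
  calc |A *ᵥ u ⬝ᵥ u - B *ᵥ u ⬝ᵥ u| ≤ ∑ j, ∑ k, δ * (|u k| * |u j|) := by
        rw [hexpand]
        refine (Finset.abs_sum_le_sum_abs _ _).trans (Finset.sum_le_sum fun j _ =>
          (Finset.abs_sum_le_sum_abs _ _).trans (Finset.sum_le_sum fun k _ => ?_))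
        rw [abs_mul, abs_mul]
        exact mul_le_mul_of_nonneg_right (hAB j k) (by positivity)
    _ = δ * (∑ i, |u i|) ^ 2 := by
        rw [sq, Finset.sum_mul_sum, Finset.mul_sum, Finset.sum_comm]
        simp only [Finset.mul_sum]
    _ ≤ δ * Fintype.card ι * ‖u‖ ^ 2 := by
        rw [mul_assoc]; exact mul_le_mul_of_nonneg_left hcauchy hδ

end QuadraticForm

section GaussianWeight

variable {ι : Type*} [Fintype ι] {w : EuclideanSpace ℝ ι → ℝ} {C c : ℝ} {k : ℕ}

theorem integrable_mul_exp_neg_mulVec_dotProduct (hw : AEStronglyMeasurable w)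
    (hwC : ∀ u, |w u| ≤ C * ‖u‖ ^ k) (hc : 0 < c) {D : Matrix ι ι ℝ}
    (hD : ∀ u : EuclideanSpace ℝ ι, c * ‖u‖ ^ 2 ≤ D *ᵥ u ⬝ᵥ u) :
    Integrable fun u : EuclideanSpace ℝ ι => w u * exp (-(D *ᵥ u ⬝ᵥ u) / 2) := by
  refine ((integrable_norm_pow_mul_exp_neg_mul_sq volume k (half_pos hc)).const_mul C).mono'
    (hw.mul (Continuous.aestronglyMeasurable (by fun_prop))) (ae_of_all _ fun u => ?_)
  rw [norm_mul, norm_of_nonneg (exp_pos _).le, Real.norm_eq_abs, ← mul_assoc]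
  exact mul_le_mul (hwC u) (exp_le_exp.2 (by linarith [hD u])) (exp_pos _).le
    ((abs_nonneg _).trans (hwC u))

theorem abs_mul_exp_neg_mulVec_dotProduct_sub_le (hwC : ∀ u, |w u| ≤ C * ‖u‖ ^ k)
    {A B : Matrix ι ι ℝ} (hA : ∀ u : EuclideanSpace ℝ ι, c * ‖u‖ ^ 2 ≤ A *ᵥ u ⬝ᵥ u)
    (hB : ∀ u : EuclideanSpace ℝ ι, c * ‖u‖ ^ 2 ≤ B *ᵥ u ⬝ᵥ u) {δ : ℝ} (hδ : 0 ≤ δ)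
    (hAB : ∀ j k, |A j k - B j k| ≤ δ) (u : EuclideanSpace ℝ ι) :
    |w u * exp (-(B *ᵥ u ⬝ᵥ u) / 2) - w u * exp (-(A *ᵥ u ⬝ᵥ u) / 2)| ≤
      C * δ * Fintype.card ι / 2 * (‖u‖ ^ (k + 2) * exp (-(c / 2) * ‖u‖ ^ 2)) := by
  have hexp : |exp (-(B *ᵥ u ⬝ᵥ u / 2)) - exp (-(A *ᵥ u ⬝ᵥ u / 2))| ≤
      δ * Fintype.card ι * ‖u‖ ^ 2 / 2 * exp (-(c / 2 * ‖u‖ ^ 2)) := by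
    refine (abs_exp_neg_sub_exp_neg_le (a := c / 2 * ‖u‖ ^ 2) (by linarith [hB u])
      (by linarith [hA u])).trans ?_
    gcongr
    rw [← sub_div, abs_div, abs_two, abs_sub_comm]
    gcongr
    exact abs_mulVec_dotProduct_sub_le hδ hAB u
  rw [← mul_sub, abs_mul, neg_div, neg_div]
  calc |w u| * |exp (-(B *ᵥ u ⬝ᵥ u / 2)) - exp (-(A *ᵥ u ⬝ᵥ u / 2))|
      ≤ C * ‖u‖ ^ k * (δ * Fintype.card ι * ‖u‖ ^ 2 / 2 * exp (-(c / 2 * ‖u‖ ^ 2))) :=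
        mul_le_mul (hwC u) hexp (abs_nonneg _) ((abs_nonneg _).trans (hwC u))
    _ = C * δ * Fintype.card ι / 2 * (‖u‖ ^ (k + 2) * exp (-(c / 2) * ‖u‖ ^ 2)) := by
        rw [pow_add, neg_mul]; ring

theorem exists_abs_integral_mul_exp_neg_mulVec_dotProduct_sub_le
    (hw : AEStronglyMeasurable w) (hC : 0 ≤ C) (hwC : ∀ u, |w u| ≤ C * ‖u‖ ^ k)
    {A : Matrix ι ι ℝ} (hA : A.PosDef) :
    ∃ K ≥ 0, ∃ ε > 0, ∀ B : Matrix ι ι ℝ, ∀ δ : ℝ, 0 ≤ δ → δ ≤ ε →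
      (∀ j k, |A j k - B j k| ≤ δ) →
      |(∫ u : EuclideanSpace ℝ ι, w u * exp (-(B *ᵥ u ⬝ᵥ u) / 2)) -
          ∫ u : EuclideanSpace ℝ ι, w u * exp (-(A *ᵥ u ⬝ᵥ u) / 2)| ≤ K * δ := by
  obtain ⟨c, hc, hcA⟩ := hA.exists_pos_mul_norm_sq_le
  set N : ℝ := (Fintype.card ι : ℝ)
  have hgauss := integrable_norm_pow_mul_exp_neg_mul_sq (volume : Measure (EuclideanSpace ℝ ι))
    (k + 2) (half_pos (half_pos hc))
  refine ⟨C * N / 2 * ∫ u : EuclideanSpace ℝ ι, ‖u‖ ^ (k + 2) * exp (-(c / 2 / 2) * ‖u‖ ^ 2),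
    by positivity, c / (2 * (N + 1)), by positivity, fun B δ hδ hδε hAB => ?_⟩
  -- `ε` is chosen so that the perturbation costs at most half the coercivity constant of `A`.
  have hδN : δ * N ≤ c / 2 := calc
    δ * N ≤ c / (2 * (N + 1)) * (N + 1) := by gcongr; linarith
    _ = c / 2 := by field_simp [show N + 1 ≠ 0 by positivity]
  have hA' : ∀ u : EuclideanSpace ℝ ι, c / 2 * ‖u‖ ^ 2 ≤ A *ᵥ u ⬝ᵥ u := fun u => by
    nlinarith [hcA u, sq_nonneg ‖u‖]
  have hB' : ∀ u : EuclideanSpace ℝ ι, c / 2 * ‖u‖ ^ 2 ≤ B *ᵥ u ⬝ᵥ u := fun u => by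
    nlinarith [hcA u, le_abs_self (A *ᵥ u ⬝ᵥ u - B *ᵥ u ⬝ᵥ u),
      abs_mulVec_dotProduct_sub_le hδ hAB u, mul_le_mul_of_nonneg_right hδN (sq_nonneg ‖u‖)]
  rw [← integral_sub (integrable_mul_exp_neg_mulVec_dotProduct hw hwC (half_pos hc) hB')
    (integrable_mul_exp_neg_mulVec_dotProduct hw hwC (half_pos hc) hA')]
  refine (norm_integral_le_of_norm_le (G := ℝ) (hgauss.const_mul (C * δ * N / 2)) ?_).trans_eq ?_
  · exact ae_of_all _ (abs_mul_exp_neg_mulVec_dotProduct_sub_le hwC hA' hB' hδ hAB)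
  · rw [integral_const_mul]
    ring

end GaussianWeight

theorem abs_prod_abs_det_le {ι κ : Type*} [Fintype ι] [Fintype κ] [DecidableEq κ]
    (u : EuclideanSpace ℝ (ι × κ × κ)) :
    |(∏ i, |(Matrix.of fun j k => u (i, j, k)).det|)| ≤
      ((Fintype.card κ).factorial : ℝ) ^ Fintype.card ι *
        ‖u‖ ^ (Fintype.card ι * Fintype.card κ) := by
  rw [abs_of_nonneg (by positivity), pow_mul', ← mul_pow, ← Finset.card_univ (α := ι),
    ← Finset.prod_const]
  gcongr with i
  simpa using Matrix.det_le (abv := AbsoluteValue.abs) (A := Matrix.of fun j k => u (i, j, k))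
    (fun j k => by simpa using PiLp.norm_apply_le u (i, j, k))

theorem kac_rice_integral_holder_general (m n : ℕ)
    (A : Matrix (Fin m × Fin n × Fin n) (Fin m × Fin n × Fin n) ℝ) (hA : A.PosDef) :
    ∃ C : ℝ, ∃ ε > (0 : ℝ),
      ∀ B : Matrix (Fin m × Fin n × Fin n) (Fin m × Fin n × Fin n) ℝ, ∀ δ : ℝ,
        0 ≤ δ → δ ≤ ε → (∀ j k, |A j k - B j k| ≤ δ) →
        |(∫ u : EuclideanSpace ℝ (Fin m × Fin n × Fin n),
              (∏ i : Fin m, |(Matrix.of fun j k => u (i, j, k)).det|) *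
                exp (-(B.mulVec u ⬝ᵥ u) / 2)) -
            ∫ u : EuclideanSpace ℝ (Fin m × Fin n × Fin n),
              (∏ i : Fin m, |(Matrix.of fun j k => u (i, j, k)).det|) *
                exp (-(A.mulVec u ⬝ᵥ u) / 2)| ≤ C * Real.sqrt δ := by
  have hweight : Continuous fun u : EuclideanSpace ℝ (Fin m × Fin n × Fin n) =>
      ∏ i : Fin m, |(Matrix.of fun j k => u (i, j, k)).det| := by fun_prop
  obtain ⟨K, hK, ε, hε, hlip⟩ := exists_abs_integral_mul_exp_neg_mulVec_dotProduct_sub_le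
    hweight.aestronglyMeasurable (pow_nonneg (Nat.cast_nonneg _) _) abs_prod_abs_det_le hA
  refine ⟨K * √ε, ε, hε, fun B δ hδ hδε hAB => (hlip B δ hδ hδε hAB).trans ?_⟩
  calc K * δ = K * (√δ * √δ) := by rw [mul_self_sqrt hδ]
    _ ≤ K * (√ε * √δ) := by gcongr
    _ = K * √ε * √δ := by ring

/-- Hölder-`1/2` continuity of the Kac–Rice integral in the matrix of the quadratic form:
for a positive definite `A`, there are constants `C` and `ε > 0` such that whenever all
entries of `B` differ from those of `A` by at most `δ ≤ ε`, the two integrals differ by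
at most `C √δ`. -/
theorem kac_rice_integral_holder (m n : ℕ) (hm : 1 ≤ m) (hn : 1 ≤ n)
    (A : Matrix (Fin m × Fin n × Fin n) (Fin m × Fin n × Fin n) ℝ) (hA : A.PosDef) :
    ∃ C : ℝ, ∃ ε > (0 : ℝ),
      ∀ B : Matrix (Fin m × Fin n × Fin n) (Fin m × Fin n × Fin n) ℝ, ∀ δ : ℝ,
        0 ≤ δ → δ ≤ ε → (∀ j k, |A j k - B j k| ≤ δ) →
        |(∫ u : EuclideanSpace ℝ (Fin m × Fin n × Fin n),
              (∏ i : Fin m, |(Matrix.of fun j k => u (i, j, k)).det|) *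
                exp (-(B.mulVec u ⬝ᵥ u) / 2)) -
            ∫ u : EuclideanSpace ℝ (Fin m × Fin n × Fin n),
              (∏ i : Fin m, |(Matrix.of fun j k => u (i, j, k)).det|) *
                exp (-(A.mulVec u ⬝ᵥ u) / 2)| ≤ C * Real.sqrt δ :=
  kac_rice_integral_holder_general m n A hA
end
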